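/- Expectation bound for the permuted sliced Wasserstein statistic (Proposition 14): Let p ≥ 1, D > 0, integers 1 ≤ n ≤ m, N = n+m. Fix points x_1,…,x_N ∈ ℝ^d with ‖x_i‖ ≤ D for all i, and fix directions θ_1,…,θ_L ∈ S^{d−1}. Let π be a uniformly random permutation of {1,…,N}. Then E_π[ ŜW^{p,π}_p ] = (1/L) Σ_{ℓ=1}^L E_π[ W_p^p( Π^{θ_ℓ}_#μ̂^π_n, Π^{θ_ℓ}_#ν̂^π_m ) ] ≤ (4D)^p · √2 / √n. -/

import Mathlib

open MeasureTheory Finset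
open scoped ENNReal

noncomputable section

/-- The set of couplings of two probability measures `P` and `Q`. -/
def couplings {X : Type*} [MeasurableSpace X] (P Q : Measure X) : Set (Measure (X × X)) :=
  {γ | IsProbabilityMeasure γ ∧ γ.map Prod.fst = P ∧ γ.map Prod.snd = Q}

/-- The `p`-th power of the `p`-Wasserstein distance between `P` and `Q`. -/
def WpPow {X : Type*} [MeasurableSpace X] [PseudoMetricSpace X] (p : ℝ) (P Q : Measure X) : ℝ :=
  sInf ((fun γ : Measure (X × X) => ∫ xy, dist xy.1 xy.2 ^ p ∂γ) '' couplings P Q)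

/-- Euclidean space `ℝ^d`. -/
abbrev Euc (d : ℕ) := EuclideanSpace ℝ (Fin d)

/-- Pushforward of a measure on `ℝ^d` under the projection `x ↦ ⟨θ, x⟩`. -/
def projMeasure {d : ℕ} (θ : Euc d) (μ : Measure (Euc d)) : Measure ℝ :=
  μ.map (fun y => (inner ℝ θ y : ℝ))

/-- Empirical measure of a finite family of points. -/
def empMeas {ι X : Type*} [Fintype ι] [MeasurableSpace X] (v : ι → X) : Measure X :=
  (Fintype.card ι : ℝ≥0∞)⁻¹ • ∑ i, Measure.dirac (v i)

/-- Monte-Carlo sliced Wasserstein statistic between the empirical measures of two samples,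
using projection directions `θ 1, …, θ L`. -/
def swStat (p : ℝ) {d n m L : ℕ} (Y : Fin n → Euc d) (Z : Fin m → Euc d)
    (θ : Fin L → Euc d) : ℝ :=
  (L : ℝ)⁻¹ * ∑ ℓ : Fin L,
    WpPow p (projMeasure (θ ℓ) (empMeas Y)) (projMeasure (θ ℓ) (empMeas Z))

/-- Permuted sliced Wasserstein statistic. -/
def swPermStat (p : ℝ) {d : ℕ} (n m : ℕ) {L : ℕ} (x : Fin (n + m) → Euc d)
    (π : Equiv.Perm (Fin (n + m))) (θ : Fin L → Euc d) : ℝ :=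
  swStat p (fun i : Fin n => x (π (Fin.castAdd m i)))
    (fun j : Fin m => x (π (Fin.natAdd n j))) θ

/-- Pooled sample. -/
def pooled {d : ℕ} {n m : ℕ} (Y : Fin n → Euc d) (Z : Fin m → Euc d) : Fin (n + m) → Euc d :=
  Fin.append Y Z

/-- The permuted statistics for the `B` sampled permutations together with the identity
permutation in last position. -/
def permStatsVec (p : ℝ) {d : ℕ} (n m : ℕ) {L B : ℕ} (Y : Fin n → Euc d) (Z : Fin m → Euc d)
    (θ : Fin L → Euc d) (πs : Fin B → Equiv.Perm (Fin (n + m))) : Fin (B + 1) → ℝ :=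
  fun b => swPermStat p n m (pooled Y Z) (if h : (b : ℕ) < B then πs ⟨b, h⟩ else 1) θ

/-- Empirical `(1−α)`-quantile of a finite family of statistics. -/
def empQuantile (α : ℝ) {K : ℕ} (s : Fin K → ℝ) : ℝ :=
  sInf {t : ℝ | 1 - α ≤ (Nat.card {b : Fin K // s b ≤ t} : ℝ) / K}

/-- Population `(1−α)`-quantile of the permutation distribution of a statistic. -/
def popQuantile (α : ℝ) {N : ℕ} (f : Equiv.Perm (Fin N) → ℝ) : ℝ :=
  sInf {t : ℝ | 1 - α ≤
    (Nat.card {π : Equiv.Perm (Fin N) // f π ≤ t} : ℝ) / (Fintype.card (Equiv.Perm (Fin N)))}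

/-- Uniform probability measure on a finite type. -/
def unifFin (X : Type*) [MeasurableSpace X] [Fintype X] : Measure X :=
  (Fintype.card X : ℝ≥0∞)⁻¹ • ∑ x : X, Measure.dirac x

instance unifFin.isProbabilityMeasure (X : Type*) [MeasurableSpace X] [Fintype X] [Nonempty X] :
    IsProbabilityMeasure (unifFin X) := by
  constructor
  simp only [unifFin, Measure.smul_apply, Measure.coe_finset_sum, Finset.sum_apply,
    smul_eq_mul]
  rw [Finset.sum_congr rfl (fun x _ => (by simp : Measure.dirac x Set.univ = 1))]
  simp only [Finset.sum_const, Finset.card_univ, nsmul_eq_mul, mul_one]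
  exact ENNReal.inv_mul_cancel (by exact_mod_cast Fintype.card_ne_zero)
    (ENNReal.natCast_ne_top _)

instance (N : ℕ) : MeasurableSpace (Equiv.Perm (Fin N)) := ⊤
instance (N : ℕ) : Nonempty (Equiv.Perm (Fin N)) := ⟨1⟩

/-- Population sliced Wasserstein distance (`p`-th power) with direction distribution `σ`. -/
def SWpPow (p : ℝ) {d : ℕ} (σ : Measure (Euc d)) (μ ν : Measure (Euc d)) : ℝ :=
  ∫ θ, WpPow p (projMeasure θ μ) (projMeasure θ ν) ∂σ

end
noncomputable section

instance (N : ℕ) : MeasurableSingletonClass (Equiv.Perm (Fin N)) :=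
  ⟨fun _ => MeasurableSpace.measurableSet_top⟩


lemma map_finset_sum_loc {X Y : Type*} [MeasurableSpace X] [MeasurableSpace Y] {f : X → Y}
    (hf : Measurable f) {ι : Type*} (s : Finset ι) (μ : ι → Measure X) :
    (∑ i ∈ s, μ i).map f = ∑ i ∈ s, (μ i).map f := by
  classical
  induction s using Finset.induction with
  | empty => simp [Measure.map_zero]
  | insert _ _ h ih => rw [Finset.sum_insert h, Finset.sum_insert h, Measure.map_add _ _ hf, ih]

lemma projMeasure_empMeas {d : ℕ} (θ : Euc d) {ι : Type*} [Fintype ι] (v : ι → Euc d) :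
    projMeasure θ (empMeas v) = empMeas (fun i => (inner ℝ θ (v i) : ℝ)) := by
  have hm : Measurable (fun y : Euc d => (inner ℝ θ y : ℝ)) :=
    (continuous_const.inner continuous_id).measurable
  rw [projMeasure, empMeas, Measure.map_smul, map_finset_sum_loc hm, empMeas]
  congr 1
  exact Finset.sum_congr rfl fun i _ => Measure.map_dirac' hm (v i)


lemma integral_smul_sum_dirac {X : Type*} [MeasurableSpace X] {ι : Type*} [Fintype ι]
    (c : ℝ≥0∞) (v : ι → X) (f : X → ℝ) (hf : StronglyMeasurable f) :
    ∫ x, f x ∂(c • ∑ i : ι, Measure.dirac (v i)) = c.toReal * ∑ i : ι, f (v i) := by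
  rw [integral_smul_measure, integral_finset_sum_measure (fun i _ => ?_)]
  · simp only [smul_eq_mul]
    congr 1
    exact Finset.sum_congr rfl fun i _ => integral_dirac' f (v i) hf
  · exact ⟨⟨f, hf, Filter.EventuallyEq.rfl⟩, by
      rw [hasFiniteIntegral_iff_norm]
      calc ∫⁻ x, ENNReal.ofReal ‖f x‖ ∂Measure.dirac (v i)
          = ENNReal.ofReal ‖f (v i)‖ := lintegral_dirac' _ (hf.measurable.norm.ennreal_ofReal)
        _ < ⊤ := ENNReal.ofReal_lt_top⟩

lemma WpPow_le {X : Type*} [MeasurableSpace X] [PseudoMetricSpace X] {p : ℝ}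
    {P Q : Measure X} {γ : Measure (X × X)} (hγ : γ ∈ couplings P Q) :
    WpPow p P Q ≤ ∫ xy, dist xy.1 xy.2 ^ p ∂γ := by
  apply csInf_le
  · refine ⟨0, fun r hr => ?_⟩
    obtain ⟨γ', -, rfl⟩ := hr
    exact integral_nonneg fun xy => Real.rpow_nonneg dist_nonneg p
  · exact ⟨γ, hγ, rfl⟩


/-- index `k / m` as an element of `Fin n`, for `k : Fin (n * m)`. -/

def repIdx {n m : ℕ} (k : Fin (n * m)) : Fin n :=
  ⟨k.val / m, Nat.div_lt_of_lt_mul (by simpa [Nat.mul_comm] using k.isLt)⟩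

lemma sum_repIdx {M : Type*} [AddCommMonoid M] {n m : ℕ} (hm : 0 < m) (g : Fin n → M) :
    ∑ k : Fin (n * m), g (repIdx k) = m • ∑ i : Fin n, g i := by
  rw [← Equiv.sum_comp (finProdFinEquiv : Fin n × Fin m ≃ Fin (n * m))]
  have : ∀ z : Fin n × Fin m, repIdx (finProdFinEquiv z) = z.1 := by
    rintro ⟨i, j⟩
    simp only [repIdx, finProdFinEquiv_apply_val]
    ext
    simp [Nat.add_mul_div_left _ _ hm, Nat.div_eq_of_lt j.isLt]
  simp_rw [this]
  rw [Fintype.sum_prod_type]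
  simp [Finset.sum_const, Finset.smul_sum]


def repA {n m : ℕ} (a : Fin n → ℝ) : Fin (n * m) → ℝ := fun k => (a ∘ Tuple.sort a) (repIdx k)

def repB {n m : ℕ} (b : Fin m → ℝ) : Fin (n * m) → ℝ :=
  fun k => (b ∘ Tuple.sort b) (repIdx (Fin.cast (Nat.mul_comm n m) k))

lemma monotone_repA {n m : ℕ} (a : Fin n → ℝ) : Monotone (repA (m := m) a) := by
  intro k k' hk
  exact Tuple.monotone_sort a (by exact Nat.div_le_div_right hk : (repIdx k : ℕ) ≤ repIdx k')

lemma monotone_repB {n m : ℕ} (b : Fin m → ℝ) : Monotone (repB (n := n) b) := by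
  intro k k' hk
  exact Tuple.monotone_sort b
    (by exact Nat.div_le_div_right hk : ((repIdx (Fin.cast (Nat.mul_comm n m) k)) : ℕ) ≤
      repIdx (Fin.cast (Nat.mul_comm n m) k'))

lemma empMeas_fin {n : ℕ} (v : Fin n → ℝ) :
    empMeas v = ((n : ℕ) : ℝ≥0∞)⁻¹ • ∑ i, Measure.dirac (v i) := by
  simp [empMeas]

lemma smul_nsmul_eq {q r : ℕ} (hr : r ≠ 0) {X : Type*} [MeasurableSpace X]
    (μ : Measure X) :
    (((q * r : ℕ)) : ℝ≥0∞)⁻¹ • (r • μ) = ((q : ℕ) : ℝ≥0∞)⁻¹ • μ := by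
  rw [← Nat.cast_smul_eq_nsmul ℝ≥0∞ r μ, smul_smul]
  congr 1
  rw [Nat.cast_mul, ENNReal.mul_inv (Or.inr (ENNReal.natCast_ne_top _))
    (Or.inl (ENNReal.natCast_ne_top _)), mul_assoc,
    ENNReal.inv_mul_cancel (by exact_mod_cast hr) (ENNReal.natCast_ne_top _), mul_one]

lemma WpPow_le_repCost {n m : ℕ} (hn : 0 < n) (hm : 0 < m) {p : ℝ} (hp : 0 < p)
    (a : Fin n → ℝ) (b : Fin m → ℝ) :
    WpPow p (empMeas a) (empMeas b) ≤
      ((n * m : ℕ) : ℝ)⁻¹ * ∑ k : Fin (n * m), dist (repA a k) (repB b k) ^ p := by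
  classical
  set γ : Measure (ℝ × ℝ) :=
    ((n * m : ℕ) : ℝ≥0∞)⁻¹ • ∑ k : Fin (n * m), Measure.dirac (repA a k, repB b k) with hγdef
  have hnm0 : ((n * m : ℕ) : ℝ≥0∞) ≠ 0 := by
    simpa using Nat.pos_iff_ne_zero.mp (Nat.mul_pos hn hm)
  have hnmtop : ((n * m : ℕ) : ℝ≥0∞) ≠ ⊤ := ENNReal.natCast_ne_top _
  have hprob : IsProbabilityMeasure γ := by
    constructor
    simp only [hγdef, Measure.smul_apply, Measure.coe_finset_sum, Finset.sum_apply, smul_eq_mul]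
    rw [Finset.sum_congr rfl
      (fun k _ => (by simp : Measure.dirac (repA a k, repB b k) Set.univ = 1))]
    simp only [Finset.sum_const, Finset.card_univ, nsmul_eq_mul, mul_one, Fintype.card_fin]
    exact ENNReal.inv_mul_cancel hnm0 hnmtop
  have hmfst : γ.map Prod.fst = empMeas a := by
    rw [hγdef, Measure.map_smul, map_finset_sum_loc measurable_fst]
    rw [Finset.sum_congr rfl (fun k _ => Measure.map_dirac' measurable_fst (repA a k, repB b k))]
    show ((n * m : ℕ) : ℝ≥0∞)⁻¹ •
        (∑ k : Fin (n * m), Measure.dirac ((fun i => a (Tuple.sort a i)) (repIdx k))) = _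
    rw [sum_repIdx hm (fun i => Measure.dirac (a (Tuple.sort a i))),
      Equiv.sum_comp (Tuple.sort a) (fun i => Measure.dirac (a i)),
      smul_nsmul_eq (Nat.pos_iff_ne_zero.mp hm), empMeas_fin]
  have hmsnd : γ.map Prod.snd = empMeas b := by
    rw [hγdef, Measure.map_smul, map_finset_sum_loc measurable_snd]
    rw [Finset.sum_congr rfl (fun k _ => Measure.map_dirac' measurable_snd (repA a k, repB b k))]
    show ((n * m : ℕ) : ℝ≥0∞)⁻¹ • (∑ k : Fin (n * m),
        Measure.dirac ((fun j => b (Tuple.sort b j)) (repIdx (Fin.cast (Nat.mul_comm n m) k)))) = _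
    rw [Fintype.sum_equiv (finCongr (Nat.mul_comm n m))
      (fun k => Measure.dirac (b (Tuple.sort b (repIdx (Fin.cast (Nat.mul_comm n m) k)))))
      (fun k => Measure.dirac (b (Tuple.sort b (repIdx k)))) (fun k => rfl)]
    rw [sum_repIdx hn (fun j => Measure.dirac (b (Tuple.sort b j))),
      Equiv.sum_comp (Tuple.sort b) (fun j => Measure.dirac (b j))]
    rw [show n * m = m * n from Nat.mul_comm n m, smul_nsmul_eq (Nat.pos_iff_ne_zero.mp hn), empMeas_fin]
  have hcost : (∫ xy : ℝ × ℝ, dist xy.1 xy.2 ^ p ∂γ) =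
      ((n * m : ℕ) : ℝ)⁻¹ * ∑ k : Fin (n * m), dist (repA a k) (repB b k) ^ p := by
    rw [hγdef, integral_smul_sum_dirac _ _ _
      ((continuous_fst.dist continuous_snd).rpow_const (fun xy => Or.inr hp.le)).stronglyMeasurable]
    simp
  exact hcost ▸ WpPow_le ⟨hprob, hmfst, hmsnd⟩


def cnt {M : ℕ} (v : Fin M → ℝ) (t : ℝ) : ℝ := ∑ k, (if v k ≤ t then (1:ℝ) else 0)

lemma chi_integrable {D u : ℝ} :
    Integrable (fun t => if u ≤ t then (1:ℝ) else 0) (volume.restrict (Set.Ioc (-D) D)) := by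
  have hmeas : Measurable (fun t => if u ≤ t then (1:ℝ) else 0) :=
    Measurable.ite measurableSet_Ici measurable_const measurable_const
  refine Integrable.mono' (integrable_const 1) hmeas.aestronglyMeasurable ?_
  filter_upwards with t
  by_cases h : u ≤ t <;> simp [h]

lemma chi_integral {D u : ℝ} (hu : u ∈ Set.Icc (-D) D) :
    ∫ t in Set.Ioc (-D) D, (if u ≤ t then (1:ℝ) else 0) = D - u := by
  have h1 : (fun t => if u ≤ t then (1:ℝ) else 0) = Set.indicator (Set.Ici u) (fun _ => 1) := by
    funext t; simp [Set.indicator_apply, Set.mem_Ici]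
  rw [h1, integral_indicator measurableSet_Ici, setIntegral_const, measureReal_def,
    Measure.restrict_apply measurableSet_Ici]
  have hvol : volume (Set.Ici u ∩ Set.Ioc (-D) D) = ENNReal.ofReal (D - u) := by
    apply le_antisymm
    · calc volume (Set.Ici u ∩ Set.Ioc (-D) D) ≤ volume (Set.Icc u D) := by
            apply measure_mono; rintro t ⟨h1, h2, h3⟩; exact ⟨h1, h3⟩
        _ = ENNReal.ofReal (D - u) := Real.volume_Icc
    · calc ENNReal.ofReal (D - u) = volume (Set.Ioc u D) := Real.volume_Ioc.symm
        _ ≤ volume (Set.Ici u ∩ Set.Ioc (-D) D) := by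
            apply measure_mono; rintro t ⟨h1, h2⟩
            exact ⟨h1.le, lt_of_lt_of_le (lt_of_le_of_lt hu.1 h1) le_rfl, h2⟩
  rw [hvol, ENNReal.toReal_ofReal (by linarith [hu.2] : 0 ≤ D - u), smul_eq_mul, mul_one]

lemma chi_abs_integral {D u v : ℝ} (hu : u ∈ Set.Icc (-D) D) (hv : v ∈ Set.Icc (-D) D) :
    ∫ t in Set.Ioc (-D) D, |(if u ≤ t then (1:ℝ) else 0) - (if v ≤ t then (1:ℝ) else 0)|
      = dist u v := by
  rcases le_total u v with h | h
  · have hpw : ∀ t, |(if u ≤ t then (1:ℝ) else 0) - (if v ≤ t then (1:ℝ) else 0)|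
        = (if u ≤ t then (1:ℝ) else 0) - (if v ≤ t then (1:ℝ) else 0) := by
      intro t
      apply abs_of_nonneg
      by_cases h2 : v ≤ t
      · simp [h2, le_trans h h2]
      · by_cases h1 : u ≤ t <;> simp [h1, h2]
    simp_rw [hpw]
    rw [integral_sub chi_integrable chi_integrable, chi_integral hu, chi_integral hv,
      Real.dist_eq, abs_of_nonpos (by linarith)]
    ring
  · have hpw : ∀ t, |(if u ≤ t then (1:ℝ) else 0) - (if v ≤ t then (1:ℝ) else 0)|
        = (if v ≤ t then (1:ℝ) else 0) - (if u ≤ t then (1:ℝ) else 0) := by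
      intro t
      rw [abs_sub_comm]
      apply abs_of_nonneg
      by_cases h2 : u ≤ t
      · simp [h2, le_trans h h2]
      · by_cases h1 : v ≤ t <;> simp [h1, h2]
    simp_rw [hpw]
    rw [integral_sub chi_integrable chi_integrable, chi_integral hv, chi_integral hu,
      Real.dist_eq, abs_of_nonneg (by linarith)]
    ring

/-- For monotone tuples, pointwise sum of indicator gaps equals the count gap. -/

lemma sum_abs_chi_eq {M : ℕ} {A B : Fin M → ℝ} (hA : Monotone A) (hB : Monotone B) (t : ℝ) :
    ∑ k, |(if A k ≤ t then (1:ℝ) else 0) - (if B k ≤ t then (1:ℝ) else 0)|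
      = |cnt A t - cnt B t| := by
  have hdich : (∀ k, A k ≤ t → B k ≤ t) ∨ (∀ k, B k ≤ t → A k ≤ t) := by
    by_contra h
    push_neg at h
    obtain ⟨⟨k, hAk, hBk⟩, ⟨k', hBk', hAk'⟩⟩ := h
    rcases le_total k k' with hkk | hkk
    · exact absurd (le_trans (hB hkk) hBk') (not_le.mpr hBk)
    · exact absurd (le_trans (hA hkk) hAk) (not_le.mpr hAk')
  have key : ∀ (x y : Fin M → ℝ), (∀ k, (if y k ≤ t then (1:ℝ) else 0) ≤ (if x k ≤ t then (1:ℝ) else 0)) →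
      ∑ k, |(if x k ≤ t then (1:ℝ) else 0) - (if y k ≤ t then (1:ℝ) else 0)| = cnt x t - cnt y t := by
    intro x y hxy
    rw [Finset.sum_congr rfl (fun k _ => abs_of_nonneg (by linarith [hxy k]))]
    rw [Finset.sum_sub_distrib]
    rfl
  rcases hdich with h | h
  · have h' : ∀ k, (if A k ≤ t then (1:ℝ) else 0) ≤ (if B k ≤ t then (1:ℝ) else 0) := by
      intro k
      by_cases h1 : A k ≤ t
      · simp [h1, h k h1]
      · by_cases h2 : B k ≤ t <;> simp [h1, h2]
    rw [Finset.sum_congr rfl (fun k _ => abs_sub_comm _ _), key B A h',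
      abs_sub_comm, abs_of_nonneg]
    have := key B A h'
    have hge : cnt A t ≤ cnt B t := by
      unfold cnt; exact Finset.sum_le_sum fun k _ => h' k
    linarith
  · have h' : ∀ k, (if B k ≤ t then (1:ℝ) else 0) ≤ (if A k ≤ t then (1:ℝ) else 0) := by
      intro k
      by_cases h1 : B k ≤ t
      · simp [h1, h k h1]
      · by_cases h2 : A k ≤ t <;> simp [h1, h2]
    rw [key A B h', abs_of_nonneg]
    have hge : cnt B t ≤ cnt A t := by
      unfold cnt; exact Finset.sum_le_sum fun k _ => h' k
    linarith

lemma sum_dist_eq_integral {M : ℕ} {D : ℝ} (A B : Fin M → ℝ)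
    (hA : Monotone A) (hB : Monotone B)
    (hAx : ∀ k, A k ∈ Set.Icc (-D) D) (hBx : ∀ k, B k ∈ Set.Icc (-D) D) :
    ∑ k, dist (A k) (B k) = ∫ t in Set.Ioc (-D) D, |cnt A t - cnt B t| := by
  have : ∀ k : Fin M, dist (A k) (B k) =
      ∫ t in Set.Ioc (-D) D, |(if A k ≤ t then (1:ℝ) else 0) - (if B k ≤ t then (1:ℝ) else 0)| :=
    fun k => (chi_abs_integral (hAx k) (hBx k)).symm
  rw [Finset.sum_congr rfl (fun k _ => this k), ← integral_finset_sum]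
  · apply setIntegral_congr_fun measurableSet_Ioc
    intro t _
    exact sum_abs_chi_eq hA hB t
  · exact fun k _ => (chi_integrable.sub chi_integrable).abs


lemma cnt_repA {n m : ℕ} (hm : 0 < m) (a : Fin n → ℝ) (t : ℝ) :
    cnt (repA (m := m) a) t = m * cnt a t := by
  unfold cnt repA
  rw [sum_repIdx hm (fun i => if (a ∘ Tuple.sort a) i ≤ t then (1:ℝ) else 0)]
  simp only [Function.comp]
  rw [Equiv.sum_comp (Tuple.sort a) (fun i => if a i ≤ t then (1:ℝ) else 0), nsmul_eq_mul]

lemma cnt_repB {n m : ℕ} (hn : 0 < n) (b : Fin m → ℝ) (t : ℝ) :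
    cnt (repB (n := n) b) t = n * cnt b t := by
  unfold cnt repB
  rw [Fintype.sum_equiv (finCongr (Nat.mul_comm n m))
    (fun k => if (b ∘ Tuple.sort b) (repIdx (Fin.cast (Nat.mul_comm n m) k)) ≤ t then (1:ℝ) else 0)
    (fun k => if (b ∘ Tuple.sort b) (repIdx k) ≤ t then (1:ℝ) else 0) (fun k => rfl)]
  rw [sum_repIdx hn (fun j => if (b ∘ Tuple.sort b) j ≤ t then (1:ℝ) else 0)]
  simp only [Function.comp]
  rw [Equiv.sum_comp (Tuple.sort b) (fun j => if b j ≤ t then (1:ℝ) else 0), nsmul_eq_mul]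

lemma rpow_le_pow_sub_one_mul {x c p : ℝ} (hx : 0 ≤ x) (hxc : x ≤ c) (hc : 0 < c) (hp : 1 ≤ p) :
    x ^ p ≤ c ^ (p - 1) * x := by
  rcases eq_or_lt_of_le hx with h | h
  · rw [← h, Real.zero_rpow (by linarith), mul_zero]
  · calc x ^ p = x ^ (p - 1 + 1) := by norm_num
      _ = x ^ (p - 1) * x ^ (1:ℝ) := Real.rpow_add h _ _
      _ = x ^ (p - 1) * x := by rw [Real.rpow_one]
      _ ≤ c ^ (p - 1) * x := by
          apply mul_le_mul_of_nonneg_right _ hx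
          exact Real.rpow_le_rpow hx hxc (by linarith)

lemma WpPow_le_cdf {n m : ℕ} (hn : 0 < n) (hm : 0 < m) {p D : ℝ} (hp : 1 ≤ p) (hD : 0 < D)
    (a : Fin n → ℝ) (b : Fin m → ℝ)
    (ha : ∀ i, a i ∈ Set.Icc (-D) D) (hb : ∀ j, b j ∈ Set.Icc (-D) D) :
    WpPow p (empMeas a) (empMeas b) ≤ (2 * D) ^ (p - 1) *
      ∫ t in Set.Ioc (-D) D, |(n : ℝ)⁻¹ * cnt a t - (m : ℝ)⁻¹ * cnt b t| := by
  have hAx : ∀ k : Fin (n * m), repA (m := m) a k ∈ Set.Icc (-D) D := fun k => ha _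
  have hBx : ∀ k : Fin (n * m), repB (n := n) b k ∈ Set.Icc (-D) D := fun k => hb _
  have hdist : ∀ k : Fin (n * m), dist (repA a k) (repB b k) ≤ 2 * D := by
    intro k
    rw [Real.dist_eq, abs_sub_le_iff]
    constructor <;> [skip; skip] <;>
      · have h1 := hAx k; have h2 := hBx k
        simp only [Set.mem_Icc] at h1 h2
        linarith [h1.1, h1.2, h2.1, h2.2]
  calc WpPow p (empMeas a) (empMeas b)
      ≤ ((n * m : ℕ) : ℝ)⁻¹ * ∑ k : Fin (n * m), dist (repA a k) (repB b k) ^ p :=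
        WpPow_le_repCost hn hm (by linarith) a b
    _ ≤ ((n * m : ℕ) : ℝ)⁻¹ * ∑ k : Fin (n * m), (2 * D) ^ (p - 1) * dist (repA a k) (repB b k) := by
        apply mul_le_mul_of_nonneg_left _ (by positivity)
        exact Finset.sum_le_sum fun k _ =>
          rpow_le_pow_sub_one_mul dist_nonneg (hdist k) (by linarith) hp
    _ = (2 * D) ^ (p - 1) * (((n * m : ℕ) : ℝ)⁻¹ * ∑ k, dist (repA a k) (repB b k)) := by
        rw [← Finset.mul_sum]; ring
    _ = (2 * D) ^ (p - 1) *
        ∫ t in Set.Ioc (-D) D, |(n : ℝ)⁻¹ * cnt a t - (m : ℝ)⁻¹ * cnt b t| := by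
        congr 1
        rw [sum_dist_eq_integral _ _ (monotone_repA a) (monotone_repB b) hAx hBx,
          ← MeasureTheory.integral_const_mul]
        apply setIntegral_congr_fun measurableSet_Ioc
        intro t _
        have hn' : (n : ℝ) ≠ 0 := Nat.cast_ne_zero.mpr hn.ne'
        have hm' : (m : ℝ) ≠ 0 := Nat.cast_ne_zero.mpr hm.ne'
        show ((n * m : ℕ) : ℝ)⁻¹ * |cnt (repA a) t - cnt (repB b) t|
            = |(n : ℝ)⁻¹ * cnt a t - (m : ℝ)⁻¹ * cnt b t|
        rw [← abs_of_nonneg (by positivity : (0:ℝ) ≤ ((n * m : ℕ) : ℝ)⁻¹), ← abs_mul,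
          mul_sub, cnt_repA hm, cnt_repB hn]
        congr 2
        · push_cast
          field_simp
        · push_cast
          field_simp


lemma exists_pair_perm {α : Type*} [DecidableEq α] {k k' l l' : α} (h1 : k ≠ k') (h2 : l ≠ l') :
    ∃ ρ : Equiv.Perm α, ρ k = l ∧ ρ k' = l' := by
  set σ1 := Equiv.swap k l with hσ1
  set y := σ1 k' with hy
  have hyl : y ≠ l := by
    intro h
    apply h1
    apply σ1.injective
    rw [show σ1 k = l from Equiv.swap_apply_left k l, ← h, hy]
  refine ⟨(Equiv.swap y l') * σ1, ?_, ?_⟩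
  · simp only [Equiv.Perm.mul_apply, hσ1, Equiv.swap_apply_left]
    exact Equiv.swap_apply_of_ne_of_ne (Ne.symm hyl) h2
  · simp only [Equiv.Perm.mul_apply, ← hy, Equiv.swap_apply_left]

lemma sum_perm_pair_invariant {N : ℕ} (F : Fin N → Fin N → ℝ) {k k' l l' : Fin N}
    (h1 : k ≠ k') (h2 : l ≠ l') :
    ∑ π : Equiv.Perm (Fin N), F (π k) (π k') = ∑ π : Equiv.Perm (Fin N), F (π l) (π l') := by
  obtain ⟨ρ, hρ1, hρ2⟩ := exists_pair_perm h1 h2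
  calc ∑ π : Equiv.Perm (Fin N), F (π k) (π k')
      = ∑ π : Equiv.Perm (Fin N), F ((π * ρ) k) ((π * ρ) k') :=
        (Equiv.sum_comp (Equiv.mulRight ρ) (fun π => F (π k) (π k'))).symm
    _ = ∑ π : Equiv.Perm (Fin N), F (π l) (π l') := by
        apply Finset.sum_congr rfl
        intro π _
        simp [Equiv.Perm.mul_apply, hρ1, hρ2]

lemma sum_perm_single_invariant {N : ℕ} (F : Fin N → ℝ) (k l : Fin N) :
    ∑ π : Equiv.Perm (Fin N), F (π k) = ∑ π : Equiv.Perm (Fin N), F (π l) := by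
  calc ∑ π : Equiv.Perm (Fin N), F (π k)
      = ∑ π : Equiv.Perm (Fin N), F ((π * Equiv.swap k l) k) :=
        (Equiv.sum_comp (Equiv.mulRight (Equiv.swap k l)) (fun π => F (π k))).symm
    _ = _ := by
        apply Finset.sum_congr rfl
        intro π _
        simp [Equiv.Perm.mul_apply, Equiv.swap_apply_left]

lemma sum_perm_sq_le {N : ℕ} (hN : 2 ≤ N) (χ c : Fin N → ℝ)
    (hχ : ∀ j, χ j = 0 ∨ χ j = 1) (hc : ∑ k, c k = 0) :
    ∑ π : Equiv.Perm (Fin N), (∑ k, c k * χ (π k))^2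
      ≤ (Fintype.card (Equiv.Perm (Fin N)) : ℝ) / 2 * ∑ k, (c k)^2 := by
  classical
  set card := (Fintype.card (Equiv.Perm (Fin N)) : ℝ) with hcard
  set K := ∑ j, χ j with hK
  set T : Fin N → Fin N → ℝ := fun k k' => ∑ π : Equiv.Perm (Fin N), χ (π k) * χ (π k') with hT
  have hN0 : (0:ℕ) < N := by omega
  set k0 : Fin N := ⟨0, by omega⟩ with hk0
  set k1 : Fin N := ⟨1, by omega⟩ with hk1
  have hk01 : k0 ≠ k1 := by simp [hk0, hk1, Fin.ext_iff]
  set t1 := T k0 k0 with ht1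
  set t2 := T k0 k1 with ht2
  -- χ is idempotent
  have hchi_sq : ∀ j, χ j * χ j = χ j := by
    intro j; rcases hχ j with h | h <;> simp [h]
  -- T on the diagonal is constant
  have hTdiag : ∀ k, T k k = t1 := fun k => sum_perm_single_invariant (fun a => χ a * χ a) k k0
  -- T off the diagonal is constant
  have hToff : ∀ k k', k ≠ k' → T k k' = t2 := fun k k' h =>
    sum_perm_pair_invariant (fun a b => χ a * χ b) h hk01
  -- relation (A): N * t1 = card * K
  have hA : (N : ℝ) * t1 = card * K := by
    have : ∑ k, T k k = ∑ k : Fin N, t1 := Finset.sum_congr rfl fun k _ => hTdiag k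
    rw [Finset.sum_const, Finset.card_univ, Fintype.card_fin, nsmul_eq_mul] at this
    rw [← this, hT]
    rw [Finset.sum_comm]
    rw [Finset.sum_congr rfl (fun π _ => ?_), Finset.sum_const, Finset.card_univ, nsmul_eq_mul]
    rw [Finset.sum_congr rfl (fun k _ => hchi_sq (π k)), hK]
    exact Equiv.sum_comp π χ
  -- relation (B): N*(N-1) * t2 = card * (K^2 - K)
  have hB : (N : ℝ) * ((N : ℝ) - 1) * t2 = card * (K^2 - K) := by
    have hsplit : ∀ π : Equiv.Perm (Fin N),
        ∑ k, ∑ k', χ (π k) * χ (π k') = K^2 := by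
      intro π
      rw [← Finset.sum_mul_sum]
      rw [Equiv.sum_comp π χ, ← hK, sq]
    have hoff : ∑ k, ∑ k' ∈ Finset.univ \ {k}, T k k' = ((N:ℝ) * ((N:ℝ) - 1)) * t2 := by
      rw [Finset.sum_congr rfl (fun k _ => Finset.sum_congr rfl
        (fun k' hk' => hToff k k' (by
          simp only [Finset.mem_sdiff, Finset.mem_singleton] at hk'
          exact fun h => hk'.2 (h ▸ rfl))))]
      have hcs : ∀ k : Fin N, ((#(Finset.univ \ {k}) : ℕ) : ℝ) = (N : ℝ) - 1 := by
        intro k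
        rw [Finset.card_sdiff_of_subset (by simp), Finset.card_univ, Fintype.card_fin,
          Finset.card_singleton]
        have h1N : (1:ℕ) ≤ N := by omega
        push_cast [h1N]
        ring
      simp only [Finset.sum_const, nsmul_eq_mul, hcs, Finset.card_univ, Fintype.card_fin]
      ring
    have hfull : ∑ k, ∑ k', T k k' = card * K^2 := by
      calc ∑ k, ∑ k', T k k'
          = ∑ k : Fin N, ∑ π : Equiv.Perm (Fin N), ∑ k', χ (π k) * χ (π k') :=
            Finset.sum_congr rfl (fun k _ => Finset.sum_comm)
        _ = ∑ π : Equiv.Perm (Fin N), ∑ k, ∑ k', χ (π k) * χ (π k') := Finset.sum_comm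
        _ = ∑ π : Equiv.Perm (Fin N), K^2 := Finset.sum_congr rfl (fun π _ => hsplit π)
        _ = card * K^2 := by rw [Finset.sum_const, Finset.card_univ, nsmul_eq_mul]
    have hdiag : ∑ k, T k k = card * K := by
      have h5 : ∑ k, T k k = (N:ℝ) * t1 := by
        rw [Finset.sum_congr rfl fun k _ => hTdiag k, Finset.sum_const, Finset.card_univ,
          Fintype.card_fin, nsmul_eq_mul]
      rw [h5, hA]
    have hdecomp : ∀ k, ∑ k', T k k' = T k k + ∑ k' ∈ Finset.univ \ {k}, T k k' := by
      intro k
      rw [← Finset.sum_sdiff (Finset.singleton_subset_iff.mpr (Finset.mem_univ k)),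
        Finset.sum_singleton]
      ring
    have : card * K^2 = card * K + (N:ℝ) * ((N:ℝ) - 1) * t2 := by
      rw [← hfull, ← hdiag, ← hoff, Finset.sum_congr rfl fun k _ => hdecomp k,
        Finset.sum_add_distrib]
    linarith
  -- expansion of the square
  have hexpand : ∑ π : Equiv.Perm (Fin N), (∑ k, c k * χ (π k))^2
      = ∑ k, ∑ k', (c k * c k') * T k k' := by
    have h1 : ∀ π : Equiv.Perm (Fin N), (∑ k, c k * χ (π k))^2
        = ∑ k, ∑ k', (c k * c k') * (χ (π k) * χ (π k')) := by
      intro π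
      rw [sq, Finset.sum_mul_sum]
      exact Finset.sum_congr rfl fun k _ => Finset.sum_congr rfl fun k' _ => by ring
    calc ∑ π : Equiv.Perm (Fin N), (∑ k, c k * χ (π k))^2
        = ∑ π : Equiv.Perm (Fin N), ∑ k, ∑ k', (c k * c k') * (χ (π k) * χ (π k')) :=
          Finset.sum_congr rfl fun π _ => h1 π
      _ = ∑ k, ∑ π : Equiv.Perm (Fin N), ∑ k', (c k * c k') * (χ (π k) * χ (π k')) :=
          Finset.sum_comm
      _ = ∑ k, ∑ k', ∑ π : Equiv.Perm (Fin N), (c k * c k') * (χ (π k) * χ (π k')) :=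
          Finset.sum_congr rfl fun k _ => Finset.sum_comm
      _ = ∑ k, ∑ k', (c k * c k') * T k k' :=
          Finset.sum_congr rfl fun k _ => Finset.sum_congr rfl fun k' _ =>
            (Finset.mul_sum _ _ _).symm
  have hite : ∑ k, ∑ k', (c k * c k') * T k k' = (t1 - t2) * ∑ k, (c k)^2 := by
    have h2 : ∀ k k' : Fin N, (c k * c k') * T k k'
        = (c k * c k') * t2 + (if k' = k then (c k * c k') * (t1 - t2) else 0) := by
      intro k k'
      by_cases h : k' = k
      · subst h; rw [hTdiag]; simp; ring
      · rw [hToff k k' (fun hh => h hh.symm)]; simp [h]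
    have h3 : ∀ k : Fin N, ∑ k', ((c k * c k') * t2
        + (if k' = k then (c k * c k') * (t1 - t2) else 0)) = (c k)^2 * (t1 - t2) := by
      intro k
      rw [Finset.sum_add_distrib,
        Finset.sum_ite_eq' Finset.univ k (fun k' => (c k * c k') * (t1 - t2))]
      have h4 : ∑ k', (c k * c k') * t2 = (c k * t2) * ∑ k', c k' := by
        rw [Finset.mul_sum]
        exact Finset.sum_congr rfl fun k' _ => by ring
      rw [h4, hc]
      simp only [Finset.mem_univ, if_true, mul_zero, zero_add]
      ring
    rw [Finset.sum_congr rfl fun k _ => Finset.sum_congr rfl fun k' _ => h2 k k',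
      Finset.sum_congr rfl fun k _ => h3 k, ← Finset.sum_mul]
    ring
  -- bound on t1 - t2
  have hK0 : 0 ≤ K := by
    rw [hK]
    apply Finset.sum_nonneg
    intro j _
    rcases hχ j with h | h <;> simp [h]
  have hKN : K ≤ (N : ℝ) := by
    rw [hK]
    calc ∑ j, χ j ≤ ∑ _j : Fin N, (1:ℝ) := Finset.sum_le_sum fun j _ => by
          rcases hχ j with h | h <;> simp [h]
      _ = (N : ℝ) := by simp
  have hcard0 : (0:ℝ) ≤ card := by positivity
  have hN2 : (2:ℝ) ≤ (N:ℝ) := by exact_mod_cast hN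
  have hdiff : t1 - t2 ≤ card / 2 := by
    have key : (N:ℝ) * ((N:ℝ) - 1) * (t1 - t2) = card * (K * ((N:ℝ) - K)) := by
      have := hA
      nlinarith [hA, hB]
    nlinarith [key, sq_nonneg (2*K - (N:ℝ)), sq_nonneg ((N:ℝ) - 2)]
  rw [hexpand, hite]
  apply mul_le_mul_of_nonneg_right hdiff ?_ |>.trans
  · apply le_of_eq; ring
  · positivity


lemma measurable_perm {N : ℕ} (f : Equiv.Perm (Fin N) → ℝ) : StronglyMeasurable f :=
  Measurable.stronglyMeasurable measurable_from_top

lemma integral_unifFin {N : ℕ} (f : Equiv.Perm (Fin N) → ℝ) :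
    ∫ π, f π ∂(unifFin (Equiv.Perm (Fin N)))
      = (Fintype.card (Equiv.Perm (Fin N)) : ℝ)⁻¹ * ∑ π : Equiv.Perm (Fin N), f π := by
  rw [unifFin, integral_smul_sum_dirac _ _ _ (measurable_perm f)]
  simp

lemma avg_abs_le_sqrt_avg_sq {X : Type*} [Fintype X] [Nonempty X] (f : X → ℝ) {w : ℝ}
    (hw : ∑ x : X, (f x)^2 ≤ (Fintype.card X : ℝ) * w) :
    (Fintype.card X : ℝ)⁻¹ * ∑ x : X, |f x| ≤ Real.sqrt w := by
  have hcard : (0:ℝ) < (Fintype.card X : ℝ) := by exact_mod_cast Fintype.card_pos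
  have hw0 : 0 ≤ w := by
    have : (0:ℝ) ≤ ∑ x : X, (f x)^2 := Finset.sum_nonneg fun x _ => sq_nonneg _
    nlinarith
  have hcs : (∑ x : X, |f x| * 1)^2 ≤ (∑ x : X, |f x|^2) * (∑ _x : X, (1:ℝ)^2) :=
    Finset.sum_mul_sq_le_sq_mul_sq Finset.univ _ _
  have h1 : (∑ x : X, |f x|)^2 ≤ (Fintype.card X : ℝ)^2 * w := by
    calc (∑ x : X, |f x|)^2 = (∑ x : X, |f x| * 1)^2 := by simp
      _ ≤ (∑ x : X, |f x|^2) * (∑ _x : X, (1:ℝ)^2) := hcs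
      _ = (∑ x : X, (f x)^2) * (Fintype.card X : ℝ) := by simp [sq_abs]
      _ ≤ ((Fintype.card X : ℝ) * w) * (Fintype.card X : ℝ) := by
          apply mul_le_mul_of_nonneg_right hw hcard.le
      _ = (Fintype.card X : ℝ)^2 * w := by ring
  have h2 : ∑ x : X, |f x| ≤ (Fintype.card X : ℝ) * Real.sqrt w := by
    have := Real.sqrt_le_sqrt h1
    rw [Real.sqrt_sq (Finset.sum_nonneg fun x _ => abs_nonneg _)] at this
    calc ∑ x : X, |f x| ≤ Real.sqrt ((Fintype.card X : ℝ)^2 * w) := this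
      _ = (Fintype.card X : ℝ) * Real.sqrt w := by
          rw [Real.sqrt_mul (by positivity), Real.sqrt_sq hcard.le]
  calc (Fintype.card X : ℝ)⁻¹ * ∑ x : X, |f x|
      ≤ (Fintype.card X : ℝ)⁻¹ * ((Fintype.card X : ℝ) * Real.sqrt w) := by
        apply mul_le_mul_of_nonneg_left h2 (by positivity)
    _ = Real.sqrt w := by field_simp


lemma perm_cdf_bound {n m : ℕ} (hn : 1 ≤ n) (hnm : n ≤ m) (v : Fin (n + m) → ℝ) (t : ℝ) :
    (Fintype.card (Equiv.Perm (Fin (n + m))) : ℝ)⁻¹ *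
      ∑ π : Equiv.Perm (Fin (n + m)),
        |(n : ℝ)⁻¹ * cnt (fun i : Fin n => v (π (Fin.castAdd m i))) t
          - (m : ℝ)⁻¹ * cnt (fun j : Fin m => v (π (Fin.natAdd n j))) t|
      ≤ Real.sqrt (n : ℝ)⁻¹ := by
  have hm : 1 ≤ m := le_trans hn hnm
  have hn' : (0:ℝ) < n := by exact_mod_cast hn
  have hm' : (0:ℝ) < m := by exact_mod_cast hm
  set χ : Fin (n + m) → ℝ := fun j => if v j ≤ t then 1 else 0 with hχdef
  set c : Fin (n + m) → ℝ :=
    Fin.append (fun _ : Fin n => (n:ℝ)⁻¹) (fun _ : Fin m => -(m:ℝ)⁻¹) with hcdef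
  have hχ : ∀ j, χ j = 0 ∨ χ j = 1 := by
    intro j
    by_cases h : v j ≤ t
    · right; simp [hχdef, h]
    · left; simp [hχdef, h]
  have hc : ∑ k, c k = 0 := by
    rw [hcdef, Fin.sum_univ_add]
    simp only [Fin.append_left, Fin.append_right, Finset.sum_const, Finset.card_univ,
      Fintype.card_fin, nsmul_eq_mul]
    field_simp
    norm_num
  have hH : ∀ π : Equiv.Perm (Fin (n + m)),
      (n : ℝ)⁻¹ * cnt (fun i : Fin n => v (π (Fin.castAdd m i))) t
        - (m : ℝ)⁻¹ * cnt (fun j : Fin m => v (π (Fin.natAdd n j))) t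
      = ∑ k, c k * χ (π k) := by
    intro π
    rw [Fin.sum_univ_add]
    simp only [hcdef, Fin.append_left, Fin.append_right]
    rw [cnt, cnt, Finset.mul_sum, Finset.mul_sum, sub_eq_add_neg, ← Finset.sum_neg_distrib]
    congr 1
    refine Finset.sum_congr rfl fun j _ => ?_
    simp only [hχdef, mul_ite, mul_one, mul_zero, neg_mul]
    by_cases h : v (π (Fin.natAdd n j)) ≤ t <;> simp [h]
  have hsq : ∑ π : Equiv.Perm (Fin (n + m)), (∑ k, c k * χ (π k))^2
      ≤ (Fintype.card (Equiv.Perm (Fin (n + m))) : ℝ) * (n : ℝ)⁻¹ := by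
    have h1 := sum_perm_sq_le (by omega) χ c hχ hc
    have h2 : ∑ k, (c k)^2 = (n:ℝ)⁻¹ + (m:ℝ)⁻¹ := by
      rw [hcdef, Fin.sum_univ_add]
      simp only [Fin.append_left, Fin.append_right, Finset.sum_const, Finset.card_univ,
        Fintype.card_fin, nsmul_eq_mul, neg_sq]
      field_simp
    rw [h2] at h1
    calc ∑ π : Equiv.Perm (Fin (n + m)), (∑ k, c k * χ (π k))^2
        ≤ (Fintype.card (Equiv.Perm (Fin (n + m))) : ℝ) / 2 * ((n:ℝ)⁻¹ + (m:ℝ)⁻¹) := h1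
      _ ≤ (Fintype.card (Equiv.Perm (Fin (n + m))) : ℝ) * (n : ℝ)⁻¹ := by
          have hcard : (0:ℝ) ≤ (Fintype.card (Equiv.Perm (Fin (n + m))) : ℝ) := by positivity
          have : (m:ℝ)⁻¹ ≤ (n:ℝ)⁻¹ := by
            apply inv_anti₀ hn' (by exact_mod_cast hnm)
          nlinarith
  calc (Fintype.card (Equiv.Perm (Fin (n + m))) : ℝ)⁻¹ *
      ∑ π : Equiv.Perm (Fin (n + m)),
        |(n : ℝ)⁻¹ * cnt (fun i : Fin n => v (π (Fin.castAdd m i))) t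
          - (m : ℝ)⁻¹ * cnt (fun j : Fin m => v (π (Fin.natAdd n j))) t|
      = (Fintype.card (Equiv.Perm (Fin (n + m))) : ℝ)⁻¹ *
        ∑ π : Equiv.Perm (Fin (n + m)), |∑ k, c k * χ (π k)| := by
        congr 1
        exact Finset.sum_congr rfl fun π _ => by rw [hH π]
    _ ≤ Real.sqrt (n : ℝ)⁻¹ := avg_abs_le_sqrt_avg_sq _ hsq


lemma cnt_integrable {M : ℕ} (v : Fin M → ℝ) {D : ℝ} :
    Integrable (fun t => cnt v t) (volume.restrict (Set.Ioc (-D) D)) := by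
  have : (fun t => cnt v t) = fun t => ∑ k, (if v k ≤ t then (1:ℝ) else 0) := rfl
  rw [this]
  exact integrable_finset_sum _ fun k _ => chi_integrable

lemma H_integrable {n m : ℕ} (a : Fin n → ℝ) (b : Fin m → ℝ) {D : ℝ} :
    Integrable (fun t => |(n : ℝ)⁻¹ * cnt a t - (m : ℝ)⁻¹ * cnt b t|)
      (volume.restrict (Set.Ioc (-D) D)) :=
  (((cnt_integrable a).const_mul _).sub ((cnt_integrable b).const_mul _)).abs

lemma per_direction_bound {n m : ℕ} (hn : 1 ≤ n) (hnm : n ≤ m) {p D : ℝ}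
    (hp : 1 ≤ p) (hD : 0 < D) (v : Fin (n + m) → ℝ) (hv : ∀ j, |v j| ≤ D) :
    (Fintype.card (Equiv.Perm (Fin (n + m))) : ℝ)⁻¹ *
      ∑ π : Equiv.Perm (Fin (n + m)),
        WpPow p (empMeas (fun i : Fin n => v (π (Fin.castAdd m i))))
                (empMeas (fun j : Fin m => v (π (Fin.natAdd n j))))
      ≤ (2 * D) ^ p * Real.sqrt (n : ℝ)⁻¹ := by
  have hm : 1 ≤ m := le_trans hn hnm
  set card := (Fintype.card (Equiv.Perm (Fin (n + m))) : ℝ) with hcarddef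
  have hcard : (0:ℝ) < card := by
    rw [hcarddef]; exact_mod_cast Fintype.card_pos
  set J : Equiv.Perm (Fin (n + m)) → ℝ := fun π =>
    ∫ t in Set.Ioc (-D) D, |(n : ℝ)⁻¹ * cnt (fun i : Fin n => v (π (Fin.castAdd m i))) t
      - (m : ℝ)⁻¹ * cnt (fun j : Fin m => v (π (Fin.natAdd n j))) t| with hJdef
  have hIcc : ∀ j, v j ∈ Set.Icc (-D) D := fun j => abs_le.mp (hv j)
  have step1 : ∀ π : Equiv.Perm (Fin (n + m)),
      WpPow p (empMeas (fun i : Fin n => v (π (Fin.castAdd m i))))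
        (empMeas (fun j : Fin m => v (π (Fin.natAdd n j))))
      ≤ (2 * D) ^ (p - 1) * J π := fun π =>
    WpPow_le_cdf hn hm hp hD _ _ (fun i => hIcc _) (fun j => hIcc _)
  have hpow : (0:ℝ) ≤ (2 * D) ^ (p - 1) := Real.rpow_nonneg (by linarith) _
  have step3 : card⁻¹ * ∑ π : Equiv.Perm (Fin (n + m)), J π ≤ 2 * D * Real.sqrt (n : ℝ)⁻¹ := by
    have hswap : ∑ π : Equiv.Perm (Fin (n + m)), J π =
        ∫ t in Set.Ioc (-D) D, ∑ π : Equiv.Perm (Fin (n + m)),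
          |(n : ℝ)⁻¹ * cnt (fun i : Fin n => v (π (Fin.castAdd m i))) t
            - (m : ℝ)⁻¹ * cnt (fun j : Fin m => v (π (Fin.natAdd n j))) t| :=
      (integral_finset_sum _ fun π _ => H_integrable _ _).symm
    rw [hswap, ← MeasureTheory.integral_const_mul]
    calc (∫ t in Set.Ioc (-D) D, card⁻¹ * ∑ π : Equiv.Perm (Fin (n + m)),
          |(n : ℝ)⁻¹ * cnt (fun i : Fin n => v (π (Fin.castAdd m i))) t
            - (m : ℝ)⁻¹ * cnt (fun j : Fin m => v (π (Fin.natAdd n j))) t|)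
        ≤ ∫ _t in Set.Ioc (-D) D, Real.sqrt (n : ℝ)⁻¹ := by
          apply integral_mono
          · exact (integrable_finset_sum _ fun π _ => H_integrable _ _).const_mul _
          · exact integrable_const _
          · intro t
            exact perm_cdf_bound hn hnm v t
      _ = 2 * D * Real.sqrt (n : ℝ)⁻¹ := by
          rw [setIntegral_const, measureReal_def, Real.volume_Ioc, smul_eq_mul,
            ENNReal.toReal_ofReal (by linarith)]
          ring_nf
  calc card⁻¹ * ∑ π : Equiv.Perm (Fin (n + m)),
        WpPow p (empMeas (fun i : Fin n => v (π (Fin.castAdd m i))))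
                (empMeas (fun j : Fin m => v (π (Fin.natAdd n j))))
      ≤ card⁻¹ * ∑ π : Equiv.Perm (Fin (n + m)), (2 * D) ^ (p - 1) * J π := by
        apply mul_le_mul_of_nonneg_left _ (by positivity)
        exact Finset.sum_le_sum fun π _ => step1 π
    _ = (2 * D) ^ (p - 1) * (card⁻¹ * ∑ π : Equiv.Perm (Fin (n + m)), J π) := by
        rw [← Finset.mul_sum]; ring
    _ ≤ (2 * D) ^ (p - 1) * (2 * D * Real.sqrt (n : ℝ)⁻¹) :=
        mul_le_mul_of_nonneg_left step3 hpow
    _ = (2 * D) ^ p * Real.sqrt (n : ℝ)⁻¹ := by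
        have h2D : (0:ℝ) < 2 * D := by linarith
        have hsplit : (2*D)^p = (2*D)^(p-1) * (2*D) := by
          have h := Real.rpow_add h2D (p-1) 1
          rw [Real.rpow_one, show p - 1 + 1 = p from by ring] at h
          exact h
        rw [hsplit]
        ring

end
/-- **Expectation bound for the permuted sliced Wasserstein statistic** (Proposition 14). -/
theorem permuted_sw_expectation_bound
    {d n m L : ℕ} (hn : 1 ≤ n) (hnm : n ≤ m) (hL : 1 ≤ L)
    {p D : ℝ} (hp : 1 ≤ p) (hD : 0 < D)
    (x : Fin (n + m) → Euc d) (hx : ∀ i, ‖x i‖ ≤ D)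
    (θ : Fin L → Euc d) (hθ : ∀ ℓ, ‖θ ℓ‖ = 1) :
    (∫ π, swPermStat p n m x π θ ∂(unifFin (Equiv.Perm (Fin (n + m)))) =
      (L : ℝ)⁻¹ * ∑ ℓ : Fin L,
        ∫ π, WpPow p
            (projMeasure (θ ℓ) (empMeas fun i : Fin n => x (π (Fin.castAdd m i))))
            (projMeasure (θ ℓ) (empMeas fun j : Fin m => x (π (Fin.natAdd n j))))
          ∂(unifFin (Equiv.Perm (Fin (n + m))))) ∧
    ∫ π, swPermStat p n m x π θ ∂(unifFin (Equiv.Perm (Fin (n + m)))) ≤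
      (4 * D) ^ p * Real.sqrt 2 / Real.sqrt n := by
  classical
  have hm : 1 ≤ m := le_trans hn hnm
  set F : Fin L → Equiv.Perm (Fin (n + m)) → ℝ := fun ℓ π =>
    WpPow p (projMeasure (θ ℓ) (empMeas fun i : Fin n => x (π (Fin.castAdd m i))))
            (projMeasure (θ ℓ) (empMeas fun j : Fin m => x (π (Fin.natAdd n j)))) with hF
  set card := (Fintype.card (Equiv.Perm (Fin (n + m))) : ℝ) with hcarddef
  have hstat : ∀ π : Equiv.Perm (Fin (n + m)),
      swPermStat p n m x π θ = (L : ℝ)⁻¹ * ∑ ℓ, F ℓ π := fun π => rfl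
  have hEQ : ∫ π, swPermStat p n m x π θ ∂(unifFin (Equiv.Perm (Fin (n + m))))
      = (L : ℝ)⁻¹ * ∑ ℓ : Fin L, card⁻¹ * ∑ π : Equiv.Perm (Fin (n + m)), F ℓ π := by
    rw [integral_unifFin (fun π => swPermStat p n m x π θ)]
    rw [Finset.sum_congr rfl fun π _ => hstat π, ← Finset.mul_sum, Finset.sum_comm]
    rw [show ∑ ℓ : Fin L, (card⁻¹ * ∑ π : Equiv.Perm (Fin (n + m)), F ℓ π)
        = card⁻¹ * ∑ ℓ : Fin L, ∑ π : Equiv.Perm (Fin (n + m)), F ℓ π from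
      (Finset.mul_sum _ _ _).symm]
    ring
  constructor
  · rw [hEQ]
    congr 1
    exact Finset.sum_congr rfl fun ℓ _ => (integral_unifFin (fun π => F ℓ π)).symm
  · rw [hEQ]
    have hper : ∀ ℓ : Fin L, card⁻¹ * ∑ π : Equiv.Perm (Fin (n + m)), F ℓ π
        ≤ (2 * D) ^ p * Real.sqrt (n : ℝ)⁻¹ := by
      intro ℓ
      set v : Fin (n + m) → ℝ := fun j => (inner ℝ (θ ℓ) (x j) : ℝ) with hv
      have hvD : ∀ j, |v j| ≤ D := by
        intro j
        calc |v j| ≤ ‖θ ℓ‖ * ‖x j‖ := abs_real_inner_le_norm _ _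
          _ = ‖x j‖ := by rw [hθ ℓ, one_mul]
          _ ≤ D := hx j
      have hrw : ∀ π : Equiv.Perm (Fin (n + m)), F ℓ π
          = WpPow p (empMeas fun i : Fin n => v (π (Fin.castAdd m i)))
            (empMeas fun j : Fin m => v (π (Fin.natAdd n j))) := by
        intro π
        simp only [hF, projMeasure_empMeas]
        rfl
      rw [Finset.sum_congr rfl fun π _ => hrw π]
      exact per_direction_bound hn hnm hp hD v hvD
    have hL : (0:ℝ) < L := by exact_mod_cast hL
    have hn' : (0:ℝ) < n := by exact_mod_cast hn
    calc (L : ℝ)⁻¹ * ∑ ℓ : Fin L, card⁻¹ * ∑ π : Equiv.Perm (Fin (n + m)), F ℓ π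
        ≤ (L : ℝ)⁻¹ * ∑ _ℓ : Fin L, (2 * D) ^ p * Real.sqrt (n : ℝ)⁻¹ := by
          apply mul_le_mul_of_nonneg_left _ (by positivity)
          exact Finset.sum_le_sum fun ℓ _ => hper ℓ
      _ = (2 * D) ^ p * Real.sqrt (n : ℝ)⁻¹ := by
          rw [Finset.sum_const, Finset.card_univ, Fintype.card_fin, nsmul_eq_mul]
          field_simp
      _ ≤ (4 * D) ^ p * Real.sqrt 2 / Real.sqrt n := by
          rw [Real.sqrt_inv]
          have hsn : (0:ℝ) < Real.sqrt n := Real.sqrt_pos.mpr hn'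
          have h2 : (2 * D) ^ p ≤ (4 * D) ^ p * Real.sqrt 2 := by
            have ha : (2 * D) ^ p ≤ (4 * D) ^ p :=
              Real.rpow_le_rpow (by linarith) (by linarith) (by linarith)
            have hb : (1:ℝ) ≤ Real.sqrt 2 := by
              rw [show (1:ℝ) = Real.sqrt 1 from (Real.sqrt_one).symm]
              exact Real.sqrt_le_sqrt (by norm_num)
            calc (2 * D) ^ p ≤ (4 * D) ^ p := ha
              _ = (4 * D) ^ p * 1 := (mul_one _).symm
              _ ≤ (4 * D) ^ p * Real.sqrt 2 := by
                  apply mul_le_mul_of_nonneg_left hb (Real.rpow_nonneg (by linarith) _)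
          calc (2 * D) ^ p * (Real.sqrt n)⁻¹ = (2 * D) ^ p / Real.sqrt n := by ring
            _ ≤ (4 * D) ^ p * Real.sqrt 2 / Real.sqrt n := by
                apply div_le_div_of_nonneg_right h2 hsn.le |>.trans_eq rfl
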